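/- arXiv:2405.14694 — 3 statements merged into one kernel-verified Lean document; each statement's English description precedes it below -/
import Mathlib

section
/- Let H be a complex Hilbert space and T ∈ B(H). If T is a 2-isometry, i.e., I - 2T*T + T*^2 T^2 = 0, then T is completely hyperexpansive: for every n ≥ 1, ∑_{i=0}^{n} (-1)^i C(n,i) T*^i T^i ≤ 0. -/
open ContinuousLinearMap Finset

private lemma stmt2_aux_sum (n : ℕ) (hn : 1 ≤ n) (g : ℕ → ℝ) (hg0 : ∀ i, 0 ≤ g i)
    (hrec : ∀ i, g (i + 2) = 2 * g (i + 1) - g i) :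
    ∑ i ∈ range (n + 1), (-1 : ℝ) ^ i * (n.choose i : ℝ) * g i ≤ 0 := by
  set s : ℝ := g 1 - g 0 with hs_def
  have hd : ∀ i, g (i + 1) = g i + s := by
    intro i
    induction i with
    | zero => simp [hs_def]
    | succ k ih => rw [hrec k, ih]; ring
  have haff : ∀ i, g i = g 0 + i * s := by
    intro i
    induction i with
    | zero => simp
    | succ k ih => rw [hd k, ih]; push_cast; ring
  have hs : 0 ≤ s := by
    by_contra hneg
    push_neg at hneg
    obtain ⟨k, hk⟩ := exists_nat_gt (g 0 / (-s))
    have h1 : g 0 < k * (-s) := (div_lt_iff₀ (by linarith)).mp hk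
    have h2 := hg0 k
    rw [haff k] at h2
    nlinarith
  have hAm : ∀ m : ℕ, ∑ i ∈ range (m + 1), (-1 : ℝ) ^ i * (m.choose i : ℝ)
      = if m = 0 then 1 else 0 := by
    intro m
    have h := Int.alternating_sum_range_choose (n := m)
    have h2 := congrArg (fun z : ℤ => (z : ℝ)) h
    push_cast at h2
    rw [h2]
  have hB : ∑ i ∈ range (n + 1), ((-1 : ℝ) ^ i * (n.choose i : ℝ)) * i ≤ 0 := by
    obtain ⟨m, rfl⟩ : ∃ m, n = m + 1 := ⟨n - 1, (Nat.succ_pred_eq_of_pos hn).symm⟩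
    rw [Finset.sum_range_succ']
    simp only [Nat.cast_zero, mul_zero, add_zero]
    have hterm : ∀ i ∈ range (m + 1), ((-1 : ℝ) ^ (i + 1) * (((m + 1).choose (i + 1) : ℕ) : ℝ)) * ((i + 1 : ℕ) : ℝ)
        = -(((m : ℝ) + 1) * ((-1 : ℝ) ^ i * (m.choose i : ℝ))) := by
      intro i _
      have hc : (((m + 1).choose (i + 1) : ℕ) : ℝ) * ((i + 1 : ℕ) : ℝ)
          = ((m : ℝ) + 1) * (m.choose i : ℝ) := by
        exact_mod_cast congrArg (Nat.cast : ℕ → ℝ) (Nat.add_one_mul_choose_eq m i).symm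
      push_cast at hc ⊢
      rw [pow_succ]
      linear_combination (-(-1 : ℝ) ^ i) * hc
    rw [Finset.sum_congr rfl hterm]
    rw [Finset.sum_neg_distrib, ← Finset.mul_sum, hAm m]
    have h0 : (0:ℝ) ≤ (if m = 0 then (1:ℝ) else 0) := by split_ifs <;> norm_num
    have h1 : (0:ℝ) ≤ (m:ℝ) + 1 := by positivity
    nlinarith
  have hAn := hAm n
  rw [if_neg (by omega : n ≠ 0)] at hAn
  calc ∑ i ∈ range (n + 1), (-1 : ℝ) ^ i * (n.choose i : ℝ) * g i
      = ∑ i ∈ range (n + 1), ((-1 : ℝ) ^ i * (n.choose i : ℝ) * g 0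
          + (((-1 : ℝ) ^ i * (n.choose i : ℝ)) * i) * s) := by
        refine Finset.sum_congr rfl fun i _ => ?_
        rw [haff i]; ring
    _ = (∑ i ∈ range (n + 1), (-1 : ℝ) ^ i * (n.choose i : ℝ)) * g 0
          + (∑ i ∈ range (n + 1), ((-1 : ℝ) ^ i * (n.choose i : ℝ)) * i) * s := by
        rw [Finset.sum_add_distrib, ← Finset.sum_mul, ← Finset.sum_mul]
    _ ≤ 0 := by
        rw [hAn]
        nlinarith [mul_nonpos_of_nonpos_of_nonneg hB hs]

/-- A 2-isometry is completely hyperexpansive. -/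
theorem stmt2 {H : Type*} [NormedAddCommGroup H] [InnerProductSpace ℂ H] [CompleteSpace H]
    (T : H →L[ℂ] H)
    (h2iso : 1 - (2 : ℝ) • (T.adjoint ∘L T) + (T ^ 2).adjoint ∘L T ^ 2 = 0) :
    ∀ n : ℕ, 1 ≤ n →
      (-(∑ i ∈ Finset.range (n + 1),
          ((-1 : ℝ) ^ i * (n.choose i : ℝ)) • ((T ^ i).adjoint ∘L T ^ i))).IsPositive := by
  have hrec : ∀ y : H, ‖y‖ ^ 2 - 2 * ‖T y‖ ^ 2 + ‖T (T y)‖ ^ 2 = 0 := by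
    intro y
    have h := congrArg (fun S : H →L[ℂ] H => RCLike.re (inner ℂ (S y) y : ℂ)) h2iso
    simp only [add_apply, sub_apply, one_apply, smul_apply, coe_comp', Function.comp_apply,
      zero_apply, inner_zero_left, inner_add_left, inner_sub_left, map_add, map_sub, map_zero,
      RCLike.real_smul_eq_coe_smul (K := ℂ), inner_smul_left, RCLike.conj_ofReal,
      adjoint_inner_left] at h
    simp only [pow_succ, pow_zero, one_mul, mul_apply_eq_comp] at h
    rw [RCLike.re_ofReal_mul] at h
    rw [one_apply_eq_self] at h
    rw [inner_self_eq_norm_sq, inner_self_eq_norm_sq, inner_self_eq_norm_sq] at h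
    linarith
  intro n hn
  refine isPositive_def'.mpr ⟨?_, ?_⟩
  · apply IsSelfAdjoint.neg
    have hsa : ∀ i : ℕ, IsSelfAdjoint ((T ^ i).adjoint ∘L T ^ i) := fun i =>
      isSelfAdjoint_iff'.mpr (by rw [adjoint_comp, adjoint_adjoint])
    show star _ = _
    rw [star_sum]
    refine Finset.sum_congr rfl fun i _ => ?_
    rw [star_smul, star_trivial, (hsa i).star_eq]
  · intro x
    have key : ∀ (c : ℝ) (i : ℕ),
        RCLike.re (inner ℂ ((c • ((T ^ i).adjoint ∘L T ^ i)) x) x : ℂ) = c * ‖(T ^ i) x‖ ^ 2 := by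
      intro c i
      rw [smul_apply, RCLike.real_smul_eq_coe_smul (K := ℂ), inner_smul_left]
      simp [adjoint_inner_left, inner_self_eq_norm_sq, RCLike.conj_ofReal]
      left; norm_cast
    have hexp : (-(∑ i ∈ Finset.range (n + 1),
          ((-1 : ℝ) ^ i * (n.choose i : ℝ)) • ((T ^ i).adjoint ∘L T ^ i))).reApplyInnerSelf x
        = -∑ i ∈ range (n + 1), (-1 : ℝ) ^ i * (n.choose i : ℝ) * ‖(T ^ i) x‖ ^ 2 := by
      rw [reApplyInnerSelf_apply]
      rw [neg_apply, inner_neg_left, ContinuousLinearMap.sum_apply, sum_inner, map_neg, map_sum]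
      congr 1
      exact Finset.sum_congr rfl fun i _ => key _ i
    rw [hexp]
    rw [neg_nonneg]
    apply stmt2_aux_sum n hn (fun i => ‖(T ^ i) x‖ ^ 2) (fun i => by positivity)
    intro i
    have h := hrec ((T ^ i) x)
    have e1 : (T ^ (i + 1)) x = T ((T ^ i) x) := by rw [pow_succ']; rfl
    have e2 : (T ^ (i + 2)) x = T (T ((T ^ i) x)) := by
      rw [show i + 2 = (i + 1) + 1 from rfl, pow_succ', mul_apply_eq_comp, e1]
    rw [e1, e2]
    linarith
end

section
/- Let α ∈ ℂ be nonzero and λ ∈ ℂ with 0 < |λ| ≤ 1. Define A by |A|² = (|α|²/(2|λ|²)) · ((1 + |α|² + |λ|²) - √((1 + |α|² + |λ|²)² - 4|λ|²)) and B = |A|² λ̄ / |α|². Then the discriminant (1 + |α|² + |λ|²)² - 4|λ|² is nonnegative, |A|² > 0, and |B| < 1. -/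
open Complex

/-- For `α ≠ 0` and `0 < |λ| ≤ 1`, the constants
`|A|² = (|α|²/(2|λ|²))((1+|α|²+|λ|²) - √((1+|α|²+|λ|²)² - 4|λ|²))` and
`B = |A|² λ̄/|α|²` satisfy: the discriminant is nonnegative, `|A|² > 0`, and `|B| < 1`. -/
theorem stmt7 (α lam : ℂ) (hα : α ≠ 0) (hlam0 : 0 < ‖lam‖)
    (hlam1 : ‖lam‖ ≤ 1)
    (A2 : ℝ)
    (hA2 : A2 = (‖α‖ ^ 2 / (2 * ‖lam‖ ^ 2)) *
      ((1 + ‖α‖ ^ 2 + ‖lam‖ ^ 2) -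
        Real.sqrt ((1 + ‖α‖ ^ 2 + ‖lam‖ ^ 2) ^ 2
          - 4 * ‖lam‖ ^ 2)))
    (B : ℂ) (hB : B = (A2 : ℂ) * (starRingEnd ℂ) lam / ((‖α‖ ^ 2 : ℝ) : ℂ)) :
    0 ≤ (1 + ‖α‖ ^ 2 + ‖lam‖ ^ 2) ^ 2 - 4 * ‖lam‖ ^ 2 ∧
    0 < A2 ∧ ‖B‖ < 1 := by
  set m := ‖lam‖ with hm
  set a := ‖α‖ ^ 2 with ha
  have ha0 : 0 < a := by
    have : ‖α‖ ≠ 0 := by simpa using hα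
    positivity
  have hD : 0 ≤ (1 + a + m ^ 2) ^ 2 - 4 * m ^ 2 := by
    nlinarith [sq_nonneg (1 + a - m ^ 2), sq_nonneg m]
  have hsq : Real.sqrt ((1 + a + m ^ 2) ^ 2 - 4 * m ^ 2) ^ 2
      = (1 + a + m ^ 2) ^ 2 - 4 * m ^ 2 := Real.sq_sqrt hD
  set s := Real.sqrt ((1 + a + m ^ 2) ^ 2 - 4 * m ^ 2) with hs
  have hsnn : 0 ≤ s := Real.sqrt_nonneg _
  have hS0 : 0 < 1 + a + m ^ 2 := by positivity
  have hslt : s < 1 + a + m ^ 2 := by nlinarith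
  have hA2pos : 0 < A2 := by
    rw [hA2]
    exact mul_pos (div_pos ha0 (by positivity)) (by linarith)
  have hkey : 1 + a + m ^ 2 - s < 2 * m := by
    have h1 : 1 + a + m ^ 2 - 2 * m < s := by
      have hx : 0 ≤ 1 + a + m ^ 2 - 2 * m := by nlinarith [sq_nonneg (1 - m)]
      rw [hs]
      rw [show (1 + a + m ^ 2 - 2 * m : ℝ) < Real.sqrt ((1 + a + m ^ 2) ^ 2 - 4 * m ^ 2)
          ↔ (1 + a + m ^ 2 - 2 * m) ^ 2 < (1 + a + m ^ 2) ^ 2 - 4 * m ^ 2 from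
        Real.lt_sqrt hx]
      nlinarith [sq_nonneg (1 - m)]
    linarith
  refine ⟨hD, hA2pos, ?_⟩
  have habsB : ‖B‖ = A2 * m / a := by
    rw [hB, norm_div, norm_mul, Complex.norm_real, Complex.norm_real,
      Complex.norm_conj, Real.norm_eq_abs, Real.norm_eq_abs, abs_of_pos hA2pos, abs_of_pos ha0]
  rw [habsB, div_lt_one ha0, hA2]
  have hm2 : (0:ℝ) < m ^ 2 := by positivity
  rw [div_mul_eq_mul_div, div_mul_eq_mul_div, div_lt_iff₀ (by positivity)]
  nlinarith [mul_pos ha0 hlam0]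
end

section
/- Let α ∈ ℂ with α ≠ 0 and λ ∈ ℂ with 0 < |λ| ≤ 1. Set s = 1 + |α|² + |λ|², and let t = (|α|²/(2|λ|²))(s + √(s² - 4|λ|²)) (the root with the plus sign). Then the quantity B⁺ = t λ̄ / |α|² satisfies |B⁺| > 1. -/
/-- Choosing the '+' root `t = (|α|²/(2|λ|²))(s + √(s² - 4|λ|²))` with
`s = 1+|α|²+|λ|²` forces `|B⁺| > 1`, where `B⁺ = t λ̄/|α|²`. -/
theorem stmt8 (α lam : ℂ) (hα : α ≠ 0) (hlam0 : 0 < ‖lam‖)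
    (hlam1 : ‖lam‖ ≤ 1)
    (s t : ℝ) (hs : s = 1 + ‖α‖ ^ 2 + ‖lam‖ ^ 2)
    (ht : t = (‖α‖ ^ 2 / (2 * ‖lam‖ ^ 2)) *
      (s + Real.sqrt (s ^ 2 - 4 * ‖lam‖ ^ 2)))
    (Bplus : ℂ)
    (hB : Bplus = (t : ℂ) * (starRingEnd ℂ) lam / ((‖α‖ ^ 2 : ℝ) : ℂ)) :
    1 < ‖Bplus‖ := by
  have ha : 0 < ‖α‖ := norm_pos_iff.mpr hα
  set a := ‖α‖ with ha'
  set l := ‖lam‖ with hl'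
  have hsq : 0 ≤ Real.sqrt (s ^ 2 - 4 * l ^ 2) := Real.sqrt_nonneg _
  have hslt : 2 * l < s := by nlinarith [sq_nonneg (1 - l)]
  have ht0 : 0 ≤ t := by
    rw [ht]
    have : 0 ≤ s + Real.sqrt (s ^ 2 - 4 * l ^ 2) := by nlinarith
    positivity
  have habs : ‖Bplus‖ = t * l / a ^ 2 := by
    rw [hB]
    rw [norm_div, norm_mul, Complex.norm_real, Complex.norm_real,
      Complex.norm_conj, Real.norm_eq_abs, Real.norm_eq_abs]
    rw [abs_of_nonneg ht0, abs_of_nonneg (by positivity : (0:ℝ) ≤ a ^ 2)]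
  rw [habs, ht]
  rw [lt_div_iff₀ (by positivity)]
  have key : 2 * l < s + Real.sqrt (s ^ 2 - 4 * l ^ 2) := by linarith
  have heq : a ^ 2 / (2 * l ^ 2) * (s + Real.sqrt (s ^ 2 - 4 * l ^ 2)) * l
      = a ^ 2 * ((s + Real.sqrt (s ^ 2 - 4 * l ^ 2)) * l) / (2 * l ^ 2) := by ring
  rw [heq, lt_div_iff₀ (by positivity)]
  nlinarith [mul_pos (mul_pos (pow_pos ha 2) hlam0) (sub_pos.mpr key)]
end
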